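/- arXiv:math/0312237 — 3 statements merged into one kernel-verified Lean document; each statement's English description precedes it below -/
import Mathlib

section
/- Let P be a graded poset whose rank levels {x ∈ P : l(x) = k} are finite for every k, and let A be an order ideal of P. Then every partial special matching defined on A extends to a maximal partial special matching of P. Moreover, if the coatom map x ↦ coat(x) is injective on P \ A, this maximal extension is unique. -/
section PosetPre

variable {α : Type*} [PartialOrder α]

/-- The set of coatoms of `y`: the elements covered by `y`. -/
def coatoms (y : α) : Set α := {x | x ⋖ y}

/-- An order ideal (downward-closed subset). -/
def IsIdeal (Q : Set α) : Prop := ∀ ⦃x y : α⦄, y ∈ Q → x ≤ y → x ∈ Q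

/-- A partial special matching of a poset `α`: an order ideal `dom` together with an
involution of it such that `u ⋖ φ u` or `φ u ⋖ u` for all `u ∈ dom`, satisfying the
coatom condition `coat(φ u) = {u} ∪ {φ v : v ⋖ u, v ⋖ φ v}` whenever `u ⋖ φ u`. -/
structure PSM (α : Type*) [PartialOrder α] where
  dom : Set α
  toFun : α → α
  ideal : IsIdeal dom
  maps : ∀ x ∈ dom, toFun x ∈ dom
  invol : ∀ x ∈ dom, toFun (toFun x) = x
  cov : ∀ x ∈ dom, toFun x ⋖ x ∨ x ⋖ toFun x
  coatom : ∀ u ∈ dom, u ⋖ toFun u →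
    coatoms (toFun u) = {u} ∪ {w | ∃ v, v ⋖ u ∧ v ⋖ toFun v ∧ w = toFun v}

/-- `ψ` extends the partial special matching `φ`. -/
def PExtends (ψ φ : PSM α) : Prop :=
  φ.dom ⊆ ψ.dom ∧ ∀ x ∈ φ.dom, ψ.toFun x = φ.toFun x

end PosetPre

/-! The coatom condition at `u` only involves the matching on `Iic u`, so the union of a family
of pairwise compatible partial special matchings is again one; Zorn's lemma then gives maximal
extensions. Two extensions of `φ` agree on their common domain, by induction on rank: if
`ψ₁ x ⋖ x`, then `ψ₂` matches `ψ₁ x` with `x` too by induction, so `ψ₂ x = ψ₁ x` by involutivity;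
if both `ψ₁ x` and `ψ₂ x` cover `x`, the coatom condition gives them the same coatoms, and they
lie outside `A`. Hence two maximal extensions glue to a common extension, and have equal domains.
-/

namespace PSM

variable {α : Type*} [PartialOrder α]

instance : Preorder (PSM α) where
  le φ ψ := PExtends ψ φ
  le_refl φ := ⟨subset_rfl, fun _ _ => rfl⟩
  le_trans _ _ _ h₁ h₂ := ⟨h₁.1.trans h₂.1, fun x hx => (h₂.2 x (h₁.1 hx)).trans (h₁.2 x hx)⟩

def Compatible (ψ₁ ψ₂ : PSM α) : Prop :=
  ∀ x ∈ ψ₁.dom, x ∈ ψ₂.dom → ψ₁.toFun x = ψ₂.toFun x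

lemma Compatible.symm {ψ₁ ψ₂ : PSM α} (h : Compatible ψ₁ ψ₂) : Compatible ψ₂ ψ₁ :=
  fun x hx₂ hx₁ => (h x hx₁ hx₂).symm

lemma compatible_of_le {ψ₁ ψ₂ : PSM α} (h : ψ₁ ≤ ψ₂) : Compatible ψ₁ ψ₂ :=
  fun x hx _ => (h.2 x hx).symm

lemma toFun_eq_of_toFun_eq {ψ : PSM α} {x y : α} (hy : y ∈ ψ.dom) (h : ψ.toFun y = x) :
    ψ.toFun x = y :=
  h ▸ ψ.invol y hy

lemma upper_covers_congr {f g : α → α} {u : α} (h : ∀ v, v ⋖ u → f v = g v) :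
    {w | ∃ v, v ⋖ u ∧ v ⋖ f v ∧ w = f v} = {w | ∃ v, v ⋖ u ∧ v ⋖ g v ∧ w = g v} :=
  Set.ext fun _ => exists_congr fun v => and_congr_right fun hv => by rw [h v hv]

section Glue

open Classical in
noncomputable def glueFun (S : Set (PSM α)) (x : α) : α :=
  if h : ∃ ψ ∈ S, x ∈ ψ.dom then h.choose.toFun x else x

variable {S : Set (PSM α)}

lemma glueFun_eq (hS : S.Pairwise Compatible) {ψ : PSM α} (hψ : ψ ∈ S) {x : α}
    (hx : x ∈ ψ.dom) : glueFun S x = ψ.toFun x := by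
  have h : ∃ ψ ∈ S, x ∈ ψ.dom := ⟨ψ, hψ, hx⟩
  rw [glueFun, dif_pos h]
  obtain ⟨hχ, hxχ⟩ := h.choose_spec
  rcases eq_or_ne h.choose ψ with heq | hne
  · rw [heq]
  · exact hS hχ hψ hne x hxχ hx

noncomputable def glue (S : Set (PSM α)) (hS : S.Pairwise Compatible) : PSM α where
  dom := ⋃ ψ ∈ S, ψ.dom
  toFun := glueFun S
  ideal x y hy hxy := by
    obtain ⟨ψ, hψ, hy⟩ := Set.mem_iUnion₂.1 hy
    exact Set.mem_iUnion₂.2 ⟨ψ, hψ, ψ.ideal hy hxy⟩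
  maps x hx := by
    obtain ⟨ψ, hψ, hx⟩ := Set.mem_iUnion₂.1 hx
    rw [glueFun_eq hS hψ hx]
    exact Set.mem_iUnion₂.2 ⟨ψ, hψ, ψ.maps x hx⟩
  invol x hx := by
    obtain ⟨ψ, hψ, hx⟩ := Set.mem_iUnion₂.1 hx
    rw [glueFun_eq hS hψ hx, glueFun_eq hS hψ (ψ.maps x hx), ψ.invol x hx]
  cov x hx := by
    obtain ⟨ψ, hψ, hx⟩ := Set.mem_iUnion₂.1 hx
    rw [glueFun_eq hS hψ hx]
    exact ψ.cov x hx
  coatom u hu hcov := by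
    obtain ⟨ψ, hψ, hu⟩ := Set.mem_iUnion₂.1 hu
    rw [glueFun_eq hS hψ hu] at hcov ⊢
    rw [ψ.coatom u hu hcov,
      upper_covers_congr fun v hv => (glueFun_eq hS hψ (ψ.ideal hu hv.le)).symm]

lemma le_glue (hS : S.Pairwise Compatible) {ψ : PSM α} (hψ : ψ ∈ S) : ψ ≤ glue S hS :=
  ⟨fun _ hx => Set.mem_iUnion₂.2 ⟨ψ, hψ, hx⟩, fun _ hx => glueFun_eq hS hψ hx⟩

end Glue

lemma exists_maximal_extension (φ : PSM α) :
    ∃ ψ : PSM α, PExtends ψ φ ∧ ∀ χ : PSM α, PExtends χ ψ → χ.dom = ψ.dom := by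
  obtain ⟨ψ, hφψ, hmax⟩ := zorn_le_nonempty_Ici₀ φ (fun c _ hc _ _ =>
    have hS : c.Pairwise Compatible := fun _ ha _ hb hne =>
      (hc ha hb hne).elim compatible_of_le fun h => (compatible_of_le h).symm
    ⟨glue c hS, fun _ => le_glue hS⟩) φ le_rfl
  exact ⟨ψ, hφψ, fun χ hψχ => (hmax hψχ).1.antisymm hψχ.1⟩

section Uniqueness

variable {φ ψ₁ ψ₂ : PSM α}

lemma toFun_eq_of_forall_covBy (hinj : Set.InjOn coatoms φ.domᶜ) (h₁ : φ ≤ ψ₁)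
    (h₂ : φ ≤ ψ₂) {x : α} (hx₁ : x ∈ ψ₁.dom) (hx₂ : x ∈ ψ₂.dom)
    (hbelow : ∀ v, v ⋖ x → ψ₁.toFun v = ψ₂.toFun v) : ψ₁.toFun x = ψ₂.toFun x := by
  by_cases hx : x ∈ φ.dom
  · rw [h₁.2 x hx, h₂.2 x hx]
  rcases ψ₁.cov x hx₁ with hdown₁ | hup₁
  · exact (toFun_eq_of_toFun_eq (ψ₂.ideal hx₂ hdown₁.le)
      ((hbelow _ hdown₁).symm.trans (ψ₁.invol x hx₁))).symm
  rcases ψ₂.cov x hx₂ with hdown₂ | hup₂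
  · exact toFun_eq_of_toFun_eq (ψ₁.ideal hx₁ hdown₂.le)
      ((hbelow _ hdown₂).trans (ψ₂.invol x hx₂))
  refine hinj (fun h => hx (φ.ideal h hup₁.le)) (fun h => hx (φ.ideal h hup₂.le)) ?_
  rw [ψ₁.coatom x hx₁ hup₁, ψ₂.coatom x hx₂ hup₂, upper_covers_congr hbelow]

lemma compatible_of_injOn_coatoms (l : α → ℕ) (hl : ∀ x y : α, x ⋖ y → l x < l y)
    (hinj : Set.InjOn coatoms φ.domᶜ) (h₁ : φ ≤ ψ₁) (h₂ : φ ≤ ψ₂) : Compatible ψ₁ ψ₂ := by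
  intro x
  induction hn : l x using Nat.strong_induction_on generalizing x with
  | _ n ih =>
    intro hx₁ hx₂
    refine toFun_eq_of_forall_covBy hinj h₁ h₂ hx₁ hx₂ fun v hv => ?_
    exact ih (l v) (hn ▸ hl v x hv) v rfl (ψ₁.ideal hx₁ hv.le) (ψ₂.ideal hx₂ hv.le)

lemma dom_eq_of_compatible (h : Compatible ψ₁ ψ₂)
    (hmax₁ : ∀ χ : PSM α, PExtends χ ψ₁ → χ.dom = ψ₁.dom)
    (hmax₂ : ∀ χ : PSM α, PExtends χ ψ₂ → χ.dom = ψ₂.dom) : ψ₁.dom = ψ₂.dom := by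
  have hS : ({ψ₁, ψ₂} : Set (PSM α)).Pairwise Compatible :=
    Set.pairwise_pair.2 fun _ => ⟨h, h.symm⟩
  rw [← hmax₁ _ (le_glue hS (Set.mem_insert _ _)),
    hmax₂ _ (le_glue hS (Set.mem_insert_of_mem _ rfl))]

end Uniqueness

end PSM

theorem stmt1_general {α : Type*} [PartialOrder α] (l : α → ℕ)
    (hgraded : ∀ x y : α, x ⋖ y → l y = l x + 1)
    (A : Set α) (φ : PSM α) (hdom : φ.dom = A) :
    (∃ ψ : PSM α, PExtends ψ φ ∧ ∀ χ : PSM α, PExtends χ ψ → χ.dom = ψ.dom) ∧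
      (Set.InjOn coatoms Aᶜ →
        ∀ ψ₁ ψ₂ : PSM α,
          PExtends ψ₁ φ → (∀ χ : PSM α, PExtends χ ψ₁ → χ.dom = ψ₁.dom) →
          PExtends ψ₂ φ → (∀ χ : PSM α, PExtends χ ψ₂ → χ.dom = ψ₂.dom) →
          ψ₁.dom = ψ₂.dom ∧ ∀ x ∈ ψ₁.dom, ψ₁.toFun x = ψ₂.toFun x) := by
  refine ⟨PSM.exists_maximal_extension φ, fun hinj ψ₁ ψ₂ h₁ hmax₁ h₂ hmax₂ => ?_⟩
  have hl : ∀ x y : α, x ⋖ y → l x < l y := fun x y h => by rw [hgraded x y h]; omega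
  have hcompat := PSM.compatible_of_injOn_coatoms l hl (hdom ▸ hinj) h₁ h₂
  have hdom_eq := PSM.dom_eq_of_compatible hcompat hmax₁ hmax₂
  exact ⟨hdom_eq, fun x hx => hcompat x hx (hdom_eq ▸ hx)⟩

/-- in a graded poset with finite rank levels, every partial special
matching with domain an order ideal `A` extends to a maximal one; if the coatom map is
injective on the complement of `A`, the maximal extension is unique. -/
theorem stmt1 {α : Type*} [PartialOrder α] (l : α → ℕ)
    (hgraded : ∀ x y : α, x ⋖ y → l y = l x + 1)
    (hlevels : ∀ k : ℕ, {x : α | l x = k}.Finite)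
    (A : Set α) (φ : PSM α) (hdom : φ.dom = A) :
    (∃ ψ : PSM α, PExtends ψ φ ∧ ∀ χ : PSM α, PExtends χ ψ → χ.dom = ψ.dom) ∧
      (Set.InjOn coatoms Aᶜ →
        ∀ ψ₁ ψ₂ : PSM α,
          PExtends ψ₁ φ → (∀ χ : PSM α, PExtends χ ψ₁ → χ.dom = ψ₁.dom) →
          PExtends ψ₂ φ → (∀ χ : PSM α, PExtends χ ψ₂ → χ.dom = ψ₂.dom) →
          ψ₁.dom = ψ₂.dom ∧ ∀ x ∈ ψ₁.dom, ψ₁.toFun x = ψ₂.toFun x) :=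
  stmt1_general l hgraded A φ hdom
end

section
/- Let (W, S) be a Coxeter system, J ⊆ S, and w ∈ W full with respect to J (i.e. for all s, t ∈ J, m_{st} < ∞ and the longest element M_{st} of ⟨s,t⟩ satisfies M_{st} ≤ w in Bruhat order). Then there exists v ∈ ⟨J⟩ full with respect to J such that v ≤ w. -/
open CoxeterSystem Polynomial

section CoxPre

variable {B : Type*} {W : Type*} [Group W] {M : CoxeterMatrix B}

/-- The alternating word of length `n` starting with the letter `i`
(and then alternating between `i` and `j`). -/
def altW (i j : B) : ℕ → List B
  | 0 => []
  | n + 1 => i :: altW j i n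

variable (cs : CoxeterSystem M W)

/-- The Bruhat order on a Coxeter group: the reflexive-transitive closure of the
relation `u → u * t` (`t` a reflection) when the length goes up. -/
def bruhatLE : W → W → Prop :=
  Relation.ReflTransGen
    (fun u v => ∃ t, cs.IsReflection t ∧ v = u * t ∧ cs.length u < cs.length v)

/-- The covering relation of the Bruhat order. -/
def bCov (u v : W) : Prop :=
  bruhatLE cs u v ∧ u ≠ v ∧ ∀ z, bruhatLE cs u z → bruhatLE cs z v → z = u ∨ z = v

/-- The set of coatoms of `v` in the Bruhat order. -/
def bCoat (v : W) : Set W := {x | bCov cs x v}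

/-- A partial special matching of `W` equipped with the Bruhat order: a Bruhat order
ideal `dom` together with an involution of it such that `u ⋖ φ u` or `φ u ⋖ u` for all
`u ∈ dom`, satisfying the coatom condition. -/
structure BSM where
  dom : Set W
  toFun : W → W
  ideal : ∀ ⦃x y : W⦄, y ∈ dom → bruhatLE cs x y → x ∈ dom
  maps : ∀ x ∈ dom, toFun x ∈ dom
  invol : ∀ x ∈ dom, toFun (toFun x) = x
  cov : ∀ x ∈ dom, bCov cs (toFun x) x ∨ bCov cs x (toFun x)
  coatom : ∀ u ∈ dom, bCov cs u (toFun u) →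
    bCoat cs (toFun u) =
      {u} ∪ {w | ∃ v, bCov cs v u ∧ bCov cs v (toFun v) ∧ w = toFun v}

/-- The standard dihedral subgroup `⟨s,t⟩` of `W`, as a set. -/
def dihedral (s t : B) : Set W :=
  (Subgroup.closure {cs.simple s, cs.simple t} : Subgroup W)

/-- `w` is full with respect to `J ⊆ S`: for all distinct `i, j ∈ J`, `m i j < ∞` and the
longest element of `⟨i,j⟩` is `≤ w` in Bruhat order. -/
def IsFullWrt (J : Set B) (w : W) : Prop :=
  ∀ i ∈ J, ∀ j ∈ J, i ≠ j →
    M i j ≠ 0 ∧ bruhatLE cs (cs.wordProd (altW i j (M i j))) w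

/-- The standard axioms characterizing the `R`-polynomials of the Hecke algebra of `W`. -/
def RAxioms (R : W → W → Polynomial ℤ) : Prop :=
  (∀ u, R u u = 1) ∧
  (∀ u v, ¬ bruhatLE cs u v → R u v = 0) ∧
  (∀ (i : B) (x y : W),
      cs.length (cs.simple i * x) = cs.length x + 1 →
      cs.length (cs.simple i * y) = cs.length y + 1 →
      R (cs.simple i * x) (cs.simple i * y) = R x y ∧
      R x (cs.simple i * y) = (X - 1) * R x y + X * R (cs.simple i * x) y) ∧
  (∀ (i : B) (x y : W),
      cs.length (x * cs.simple i) = cs.length x + 1 →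
      cs.length (y * cs.simple i) = cs.length y + 1 →
      R (x * cs.simple i) (y * cs.simple i) = R x y ∧
      R x (y * cs.simple i) = (X - 1) * R x y + X * R (x * cs.simple i) y)

variable {cs}

/-- `ψ` extends the partial special matching `φ`. -/
def BExtends (ψ φ : BSM cs) : Prop :=
  φ.dom ⊆ ψ.dom ∧ ∀ x ∈ φ.dom, ψ.toFun x = φ.toFun x

/-- `φ` is a maximal partial special matching. -/
def BMax (φ : BSM cs) : Prop := ∀ ψ : BSM cs, BExtends ψ φ → ψ.dom = φ.dom

/-- `φ` is `g`-regular on the left: its domain is stable under left multiplication by `g`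
and `φ` commutes with left multiplication by `g`. -/
def LeftReg (φ : BSM cs) (g : W) : Prop :=
  (∀ x ∈ φ.dom, g * x ∈ φ.dom) ∧ ∀ x ∈ φ.dom, φ.toFun (g * x) = g * φ.toFun x

/-- `φ` is `g`-regular on the right. -/
def RightReg (φ : BSM cs) (g : W) : Prop :=
  (∀ x ∈ φ.dom, x * g ∈ φ.dom) ∧ ∀ x ∈ φ.dom, φ.toFun (x * g) = φ.toFun x * g

end CoxPre

/-!
The elements of `⟨J⟩` below `w` in the Bruhat order have a greatest element `v`: by induction on
`ℓ(w)`, if `s` is a left descent of `w` and `v'` is the greatest such element below `sw`, then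
`v'` or `sv'` is the greatest one below `w`, by the lifting property. Each `M_{ij}` with
`i, j ∈ J` lies in `⟨J⟩` and below `w`, hence below `v`.

The lifting property comes from the subword property, which rests on the strong exchange
property. The latter holds for arbitrary words because the parity of the number of occurrences of
a reflection `t` in the right inversion sequence of a word depends only on the product `w` of the
word: it is the parity component of the action of `w` on `W × ZMod 2`, where `s_i` acts by
`(t, e) ↦ (s_i t s_i, e + [t = s_i])`.
-/

open scoped List

theorem conj_eq_iff_eq_conj {G : Type*} [Group G] (g t y : G) :
    g * t * g⁻¹ = y ↔ t = g⁻¹ * y * g := by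
  constructor <;> rintro rfl <;> group

namespace CoxeterSystem

variable {B W : Type*} [Group W] {M : CoxeterMatrix B} (cs : CoxeterSystem M W)

local prefix:100 "s" => cs.simple
local prefix:100 "π" => cs.wordProd
local prefix:100 "ℓ" => cs.length
local prefix:100 "ris" => cs.rightInvSeq

section ParityRep

open scoped Classical

noncomputable def simpleParityPerm (i : B) : Equiv.Perm (W × ZMod 2) :=
  Function.Involutive.toPerm (fun p => (s i * p.1 * s i, p.2 + if p.1 = s i then 1 else 0)) <| by
    rintro ⟨t, e⟩
    have hconj : s i * t * s i = s i ↔ t = s i := by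
      simpa using conj_eq_iff_eq_conj (s i) t (s i)
    have hcancel : s i * (s i * t * s i) * s i = t := by simp [mul_assoc]
    simp only [hcancel, hconj, Prod.mk.injEq, true_and, add_assoc]
    split_ifs <;> decide +revert

theorem simpleParityPerm_apply (i : B) (t : W) (e : ZMod 2) :
    cs.simpleParityPerm i (t, e) = (s i * t * s i, e + if t = s i then 1 else 0) := rfl

theorem simple_mul_pow_eq_inv_mul_simple (i j : B) (n : ℕ) :
    s j * (s i * s j) ^ n = ((s i * s j) ^ n)⁻¹ * s j := by
  have : s j * (s i * s j) * (s j)⁻¹ = (s i * s j)⁻¹ := by simp [mul_assoc]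
  rw [← inv_pow, ← this, conj_pow]
  simp [mul_assoc]

theorem simpleParityPerm_mul_pow (i j : B) (n : ℕ) (t : W) (e : ZMod 2) :
    ((cs.simpleParityPerm i * cs.simpleParityPerm j) ^ n) (t, e) =
      ((s i * s j) ^ n * t * ((s i * s j) ^ n)⁻¹,
        e + ∑ a ∈ Finset.range (2 * n), if t = ((s i * s j) ^ a)⁻¹ * s j then 1 else 0) := by
  induction n with
  | zero => simp
  | succ n ih =>
    set r := s i * s j
    have hj : r ^ n * t * (r ^ n)⁻¹ = s j ↔ t = (r ^ (2 * n))⁻¹ * s j := by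
      rw [conj_eq_iff_eq_conj, mul_assoc, simple_mul_pow_eq_inv_mul_simple, two_mul, pow_add,
        mul_inv_rev, mul_assoc]
    have hi : s j * (r ^ n * t * (r ^ n)⁻¹) * s j = s i ↔ t = (r ^ (2 * n + 1))⁻¹ * s j := by
      have hsis : s j * s i * s j = r⁻¹ * s j := by simp [r, mul_assoc]
      have h := conj_eq_iff_eq_conj (s j) (r ^ n * t * (r ^ n)⁻¹) (s i)
      rw [inv_simple, hsis, conj_eq_iff_eq_conj] at h
      rw [h]
      simp only [mul_assoc]
      rw [simple_mul_pow_eq_inv_mul_simple, show 2 * n + 1 = n + 1 + n by omega, pow_add,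
        pow_succ]
      simp only [mul_inv_rev, mul_assoc]
      rfl
    rw [pow_succ', Equiv.Perm.mul_apply, ih, Equiv.Perm.mul_apply, simpleParityPerm_apply,
      simpleParityPerm_apply, hj, hi, show 2 * (n + 1) = 2 * n + 1 + 1 by omega,
      Finset.sum_range_succ, Finset.sum_range_succ]
    refine Prod.ext ?_ (by simp only [add_assoc])
    simp only [r, pow_succ', mul_inv_rev, inv_simple, mul_assoc]

theorem isLiftable_simpleParityPerm : M.IsLiftable cs.simpleParityPerm := by
  intro i j
  ext ⟨t, e⟩ : 1
  rw [simpleParityPerm_mul_pow, cs.simple_mul_simple_pow, two_mul, Finset.sum_range_add]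
  -- the second half of the sum repeats the first since `(s i * s j) ^ M i j = 1`
  simp [pow_add, cs.simple_mul_simple_pow, CharTwo.add_self_eq_zero]

noncomputable def parityRep : W →* Equiv.Perm (W × ZMod 2) :=
  cs.lift ⟨cs.simpleParityPerm, cs.isLiftable_simpleParityPerm⟩

theorem parityRep_wordProd (ω : List B) (t : W) (e : ZMod 2) :
    cs.parityRep (π ω) (t, e) = (π ω * t * (π ω)⁻¹, e + ((ris ω).count t : ZMod 2)) := by
  induction ω generalizing t e with
  | nil => simp
  | cons i ω ih =>
    rw [wordProd_cons, map_mul, Equiv.Perm.mul_apply, ih, parityRep, lift_apply_simple,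
      simpleParityPerm_apply, conj_eq_iff_eq_conj, rightInvSeq, List.count_cons]
    refine Prod.ext (by simp [mul_assoc]) ?_
    simp only [beq_iff_eq, eq_comm (a := (π ω)⁻¹ * s i * π ω), Nat.cast_add, Nat.cast_ite,
      Nat.cast_one, Nat.cast_zero, add_assoc]

noncomputable def rightInvParity (w t : W) : ZMod 2 := (cs.parityRep w (t, 0)).2

theorem rightInvParity_wordProd (ω : List B) (t : W) :
    cs.rightInvParity (π ω) t = (ris ω).count t := by
  simp [rightInvParity, parityRep_wordProd]

theorem parityRep_apply (w t : W) (e : ZMod 2) :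
    cs.parityRep w (t, e) = (w * t * w⁻¹, e + cs.rightInvParity w t) := by
  obtain ⟨ω, rfl⟩ := cs.wordProd_surjective w
  rw [parityRep_wordProd, rightInvParity_wordProd]

theorem rightInvParity_mul (u v t : W) :
    cs.rightInvParity (u * v) t = cs.rightInvParity v t + cs.rightInvParity u (v * t * v⁻¹) := by
  have h := congrArg Prod.snd (congrFun (congrArg DFunLike.coe (map_mul cs.parityRep u v)) (t, 0))
  rw [Equiv.Perm.mul_apply, parityRep_apply, parityRep_apply, parityRep_apply] at h
  simpa using h

theorem rightInvParity_one (t : W) : cs.rightInvParity 1 t = 0 := by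
  simpa using cs.rightInvParity_wordProd [] t

theorem rightInvParity_inv_conj (u t : W) :
    cs.rightInvParity u⁻¹ (u * t * u⁻¹) = cs.rightInvParity u t := by
  have h := cs.rightInvParity_mul u⁻¹ u t
  rw [inv_mul_cancel, rightInvParity_one] at h
  exact (CharTwo.add_eq_zero.mp h.symm).symm

theorem rightInvParity_simple_self (i : B) : cs.rightInvParity (s i) (s i) = 1 := by
  simpa using cs.rightInvParity_wordProd [i] (s i)

theorem rightInvParity_self {t : W} (ht : cs.IsReflection t) : cs.rightInvParity t t = 1 := by
  obtain ⟨a, i, rfl⟩ := ht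
  have hconj : a⁻¹ * (a * s i * a⁻¹) * a⁻¹⁻¹ = s i := by group
  have hsi : s i * s i * (s i)⁻¹ = s i := by group
  rw [rightInvParity_mul, hconj, rightInvParity_mul, hsi, rightInvParity_simple_self,
    rightInvParity_inv_conj]
  exact (by decide : ∀ x : ZMod 2, x + (1 + x) = 1) _

theorem rightInvParity_eq_zero_of_length_lt_mul {w t : W} (hl : ℓ w < ℓ (w * t)) :
    cs.rightInvParity w t = 0 := by
  obtain ⟨ω, hω, rfl⟩ := cs.exists_isReduced w
  rw [rightInvParity_wordProd]
  have : t ∉ ris ω := fun ht ↦ (cs.isRightInversion_of_mem_rightInvSeq hω ht).2.not_gt hl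
  simp [List.count_eq_zero_of_not_mem this]

theorem rightInvParity_eq_one_of_length_mul_lt {w t : W} (ht : cs.IsReflection t)
    (hl : ℓ (w * t) < ℓ w) : cs.rightInvParity w t = 1 := by
  have hw : w * t * t = w := by rw [mul_assoc, ht.mul_self, mul_one]
  have htt : t * t * t⁻¹ = t := by rw [ht.mul_self, one_mul, ht.inv]
  have h := cs.rightInvParity_mul (w * t) t t
  rwa [hw, htt, cs.rightInvParity_self ht,
    cs.rightInvParity_eq_zero_of_length_lt_mul (w := w * t) (by rwa [hw]), add_zero] at h

theorem mem_rightInvSeq_of_length_mul_lt (ω : List B) {t : W} (ht : cs.IsReflection t)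
    (hl : ℓ (π ω * t) < ℓ (π ω)) : t ∈ ris ω := by
  have h := cs.rightInvParity_eq_one_of_length_mul_lt ht hl
  rw [rightInvParity_wordProd] at h
  exact List.count_pos_iff.mp (Nat.pos_of_ne_zero fun h0 ↦ by simp [h0] at h)

/-- The strong exchange property. -/
theorem exists_wordProd_eraseIdx_eq_mul (ω : List B) {t : W} (ht : cs.IsReflection t)
    (hl : ℓ (π ω * t) < ℓ (π ω)) : ∃ j, π (ω.eraseIdx j) = π ω * t := by
  obtain ⟨j, hj, hget⟩ := List.mem_iff_getElem.mp (cs.mem_rightInvSeq_of_length_mul_lt ω ht hl)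
  refine ⟨j, ?_⟩
  rw [← wordProd_mul_getD_rightInvSeq, List.getD_eq_getElem _ _ hj, hget]

end ParityRep

section Bruhat

variable {cs}

local infix:50 " ≼ " => bruhatLE cs

theorem length_le_of_bruhatLE {u w : W} (h : u ≼ w) : ℓ u ≤ ℓ w := by
  induction h with
  | refl => rfl
  | tail _ hstep ih => obtain ⟨t, -, rfl, hl⟩ := hstep; omega

theorem bruhatLE_mul_of_length_lt {u t : W} (ht : cs.IsReflection t) (hl : ℓ u < ℓ (u * t)) :
    u ≼ u * t :=
  .single ⟨t, ht, rfl, hl⟩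

theorem bruhatLE_simple_mul {u : W} {i : B} (hu : ¬cs.IsLeftDescent u i) : u ≼ s i * u := by
  have h : s i * u = u * (u⁻¹ * s i * u) := by group
  rw [h]
  refine bruhatLE_mul_of_length_lt (by simpa using (cs.isReflection_simple i).conj u⁻¹) ?_
  rw [← h]
  exact lt_of_le_of_ne (not_lt.mp hu) (cs.length_simple_mul_ne u i).symm

theorem simple_mul_bruhatLE {w : W} {i : B} (hw : cs.IsLeftDescent w i) : s i * w ≼ w := by
  simpa using bruhatLE_simple_mul (cs.isLeftDescent_iff_not_isLeftDescent_mul.mp hw)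

theorem exists_sublist_wordProd_eq_of_bruhatLE {u : W} {ω : List B} (h : u ≼ π ω) :
    ∃ κ, κ <+ ω ∧ π κ = u := by
  induction h using Relation.ReflTransGen.head_induction_on with
  | refl => exact ⟨ω, .refl ω, rfl⟩
  | @head a _ hstep _ ih =>
    obtain ⟨t, ht, rfl, hl⟩ := hstep
    obtain ⟨κ, hκ, hκu⟩ := ih
    have hcancel : a * t * t = a := by rw [mul_assoc, ht.mul_self, mul_one]
    obtain ⟨j, hj⟩ := cs.exists_wordProd_eraseIdx_eq_mul κ ht (by rwa [hκu, hcancel])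
    exact ⟨κ.eraseIdx j, (κ.eraseIdx_sublist j).trans hκ, by rw [hj, hκu, hcancel]⟩

variable (cs) in
theorem exists_sublist_cons_wordProd_eq_simple_mul {i : B} {ω κ : List B} (h : κ <+ i :: ω) :
    ∃ κ', κ' <+ i :: ω ∧ π κ' = s i * π κ := by
  rcases List.sublist_cons_iff.mp h with hsub | ⟨κ, rfl, hsub⟩
  · exact ⟨i :: κ, hsub.cons_cons i, wordProd_cons ..⟩
  · exact ⟨κ, hsub.cons i, by rw [wordProd_cons, simple_mul_simple_cancel_left]⟩

theorem exists_isReduced_cons_wordProd_eq {w : W} {i : B} (hw : cs.IsLeftDescent w i) :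
    ∃ ω, cs.IsReduced (i :: ω) ∧ π (i :: ω) = w := by
  obtain ⟨ω, hω, hπ⟩ := cs.exists_isReduced (s i * w)
  have hπ' : π (i :: ω) = w := by rw [wordProd_cons, ← hπ, simple_mul_simple_cancel_left]
  refine ⟨ω, ?_, hπ'⟩
  rw [IsReduced, hπ', List.length_cons, ← hω.eq, ← hπ, cs.isLeftDescent_iff.mp hw]

theorem IsReduced.not_isLeftDescent_wordProd_tail {i : B} {ω : List B}
    (hω : cs.IsReduced (i :: ω)) : ¬cs.IsLeftDescent (π ω) i := by
  have h := cs.length_wordProd_le ω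
  rw [IsLeftDescent, ← wordProd_cons, hω.eq, List.length_cons]
  omega

-- The next two lemmas assume the subword property, resp. the lifting property, up to length `ℓ w`,
-- so that together they form the inductive step of the proof of the subword property.
theorem simple_mul_bruhatLE_of_forall_sublist {u w : W} {i : B}
    (hS : ∀ ω κ : List B, cs.IsReduced ω → ω.length ≤ ℓ w → κ <+ ω → π κ ≼ π ω)
    (hw : cs.IsLeftDescent w i) (hu : u ≼ w) : s i * u ≼ w := by
  obtain ⟨ω, hω, rfl⟩ := exists_isReduced_cons_wordProd_eq hw
  obtain ⟨κ, hκ, rfl⟩ := exists_sublist_wordProd_eq_of_bruhatLE hu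
  obtain ⟨κ', hκ', hκ'π⟩ := cs.exists_sublist_cons_wordProd_eq_simple_mul hκ
  rw [← hκ'π]
  exact hS _ _ hω hω.eq.ge hκ'

theorem simple_mul_bruhatLE_simple_mul_of_forall {u w : W} {i : B}
    (hB : ∀ x u : W, ℓ x ≤ ℓ w → cs.IsLeftDescent x i → u ≼ x → s i * u ≼ x)
    (hw : ¬cs.IsLeftDescent w i) (hu : u ≼ w) : s i * u ≼ s i * w := by
  induction hu using Relation.ReflTransGen.head_induction_on with
  | refl => exact .refl
  | @head u _ hstep hxw ih =>
    obtain ⟨t, ht, rfl, hl⟩ := hstep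
    by_cases hx : cs.IsLeftDescent (u * t) i
    · exact (hB _ _ (length_le_of_bruhatLE hxw) hx (bruhatLE_mul_of_length_lt ht hl)).trans
        (hxw.trans (bruhatLE_simple_mul hw))
    · rw [← mul_assoc] at ih
      refine (bruhatLE_mul_of_length_lt ht ?_).trans ih
      have := cs.not_isLeftDescent_iff.mp hx
      rcases cs.length_simple_mul u i with h | h <;> rw [mul_assoc] <;> omega

theorem wordProd_bruhatLE_of_sublist {ω κ : List B} (hω : cs.IsReduced ω) (hκ : κ <+ ω) :
    π κ ≼ π ω := by
  generalize hn : ω.length = n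
  induction n using Nat.strong_induction_on generalizing ω κ with
  | _ n ih =>
  cases ω with
  | nil => rw [List.sublist_nil.mp hκ]; exact .refl
  | cons i ω =>
    have hω' : cs.IsReduced ω := by simpa using hω.drop 1
    have hasc := hω.not_isLeftDescent_wordProd_tail
    have ih' : ∀ ω' κ' : List B, cs.IsReduced ω' → ω'.length ≤ ℓ (π ω) → κ' <+ ω' →
        π κ' ≼ π ω' := fun ω' κ' h hl hs ↦ by
      refine ih ω'.length ?_ h hs rfl
      rw [hω'.eq] at hl
      simp only [List.length_cons] at hn
      omega
    rw [wordProd_cons]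
    rcases List.sublist_cons_iff.mp hκ with hsub | ⟨κ, rfl, hsub⟩
    · exact (ih' ω κ hω' hω'.eq.ge hsub).trans (bruhatLE_simple_mul hasc)
    · rw [wordProd_cons]
      refine simple_mul_bruhatLE_simple_mul_of_forall (fun x u hx hxi hux ↦ ?_) hasc
        (ih' ω κ hω' hω'.eq.ge hsub)
      exact simple_mul_bruhatLE_of_forall_sublist
        (fun ω' κ' h hl hs ↦ ih' ω' κ' h (hl.trans hx) hs) hxi hux

theorem simple_mul_bruhatLE_of_isLeftDescent {u w : W} {i : B} (hw : cs.IsLeftDescent w i)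
    (hu : u ≼ w) : s i * u ≼ w :=
  simple_mul_bruhatLE_of_forall_sublist (fun _ _ hω _ hκ ↦ wordProd_bruhatLE_of_sublist hω hκ)
    hw hu

theorem simple_mul_bruhatLE_simple_mul {u w : W} {i : B} (hw : ¬cs.IsLeftDescent w i)
    (hu : u ≼ w) : s i * u ≼ s i * w :=
  simple_mul_bruhatLE_simple_mul_of_forall
    (fun _ _ _ hx hux ↦ simple_mul_bruhatLE_of_isLeftDescent hx hux) hw hu

theorem bruhatLE_simple_mul_of_isLeftDescent {u w : W} {i : B} (hw : cs.IsLeftDescent w i)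
    (hu : u ≼ w) (hui : ¬cs.IsLeftDescent u i) : u ≼ s i * w := by
  obtain ⟨ω, hω, rfl⟩ := exists_isReduced_cons_wordProd_eq hw
  obtain ⟨κ, hκ, rfl⟩ := exists_sublist_wordProd_eq_of_bruhatLE hu
  rw [wordProd_cons, simple_mul_simple_cancel_left]
  have hω' : cs.IsReduced ω := by simpa using hω.drop 1
  rcases List.sublist_cons_iff.mp hκ with hsub | ⟨κ, rfl, hsub⟩
  · exact wordProd_bruhatLE_of_sublist hω' hsub
  · rw [wordProd_cons] at hui ⊢
    have hle : s i * (s i * π κ) ≼ π ω := by simpa using wordProd_bruhatLE_of_sublist hω' hsub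
    exact (bruhatLE_simple_mul hui).trans hle

theorem simple_mul_bruhatLE_simple_mul_of_isLeftDescent {u w : W} {i : B}
    (hw : cs.IsLeftDescent w i) (hu : u ≼ w) (hui : cs.IsLeftDescent u i) :
    s i * u ≼ s i * w :=
  bruhatLE_simple_mul_of_isLeftDescent hw ((simple_mul_bruhatLE hui).trans hu)
    (cs.isLeftDescent_iff_not_isLeftDescent_mul.mp hui)

section Parabolic

variable {J : Set B}

theorem wordProd_mem_closure_simple_image {ω : List B} (h : ∀ b ∈ ω, b ∈ J) :
    π ω ∈ Subgroup.closure (cs.simple '' J) := by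
  induction ω with
  | nil => exact one_mem _
  | cons i ω ih =>
    rw [wordProd_cons]
    exact mul_mem (Subgroup.subset_closure ⟨i, h i List.mem_cons_self, rfl⟩)
      (ih fun b hb ↦ h b (List.mem_cons_of_mem i hb))

theorem exists_wordProd_eq_of_mem_closure_simple_image {u : W}
    (hu : u ∈ Subgroup.closure (cs.simple '' J)) : ∃ ω : List B, (∀ b ∈ ω, b ∈ J) ∧ π ω = u := by
  induction hu using Subgroup.closure_induction with
  | mem _ hx =>
    obtain ⟨j, hj, rfl⟩ := hx
    exact ⟨[j], by simpa using hj, wordProd_singleton ..⟩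
  | one => exact ⟨[], by simp, wordProd_nil ..⟩
  | mul _ _ _ _ ihx ihy =>
    obtain ⟨ω₁, hω₁, rfl⟩ := ihx
    obtain ⟨ω₂, hω₂, rfl⟩ := ihy
    exact ⟨ω₁ ++ ω₂, by simpa [or_imp, forall_and] using ⟨hω₁, hω₂⟩, wordProd_append ..⟩
  | inv _ _ ih =>
    obtain ⟨ω, hω, rfl⟩ := ih
    exact ⟨ω.reverse, by simpa using hω, wordProd_reverse ..⟩

theorem simple_mem_closure_simple_image_of_isLeftDescent {u : W} {i : B}
    (hu : u ∈ Subgroup.closure (cs.simple '' J)) (hi : cs.IsLeftDescent u i) :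
    s i ∈ Subgroup.closure (cs.simple '' J) := by
  obtain ⟨ω, hωJ, rfl⟩ := cs.exists_wordProd_eq_of_mem_closure_simple_image hu
  obtain ⟨κ, hκ, hκπ⟩ := exists_sublist_wordProd_eq_of_bruhatLE (simple_mul_bruhatLE hi)
  have hsi : s i = π κ * (π ω)⁻¹ := by rw [hκπ]; group
  rw [hsi]
  exact mul_mem (cs.wordProd_mem_closure_simple_image fun b hb ↦ hωJ b (hκ.subset hb)) (inv_mem hu)

variable (cs) in
def IsGreatestBruhatBelow (H : Subgroup W) (w v : W) : Prop :=
  v ∈ H ∧ v ≼ w ∧ ∀ u ∈ H, u ≼ w → u ≼ v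

theorem exists_isGreatestBruhatBelow_of_isLeftDescent {w v : W} {i : B}
    (hw : cs.IsLeftDescent w i)
    (hv : cs.IsGreatestBruhatBelow (Subgroup.closure (cs.simple '' J)) (s i * w) v) :
    ∃ v', cs.IsGreatestBruhatBelow (Subgroup.closure (cs.simple '' J)) w v' := by
  obtain ⟨hvJ, hvw, hvmax⟩ := hv
  by_cases hup : s i ∈ Subgroup.closure (cs.simple '' J) ∧ ¬cs.IsLeftDescent v i
  · refine ⟨s i * v, mul_mem hup.1 hvJ, ?_, fun u hu huw ↦ ?_⟩
    · simpa using simple_mul_bruhatLE_simple_mul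
        (cs.isLeftDescent_iff_not_isLeftDescent_mul.mp hw) hvw
    by_cases hui : cs.IsLeftDescent u i
    · simpa using simple_mul_bruhatLE_simple_mul hup.2 <|
        hvmax _ (mul_mem hup.1 hu) (simple_mul_bruhatLE_simple_mul_of_isLeftDescent hw huw hui)
    · exact (hvmax u hu (bruhatLE_simple_mul_of_isLeftDescent hw huw hui)).trans
        (bruhatLE_simple_mul hup.2)
  · refine ⟨v, hvJ, hvw.trans (simple_mul_bruhatLE hw), fun u hu huw ↦ ?_⟩
    by_cases hui : cs.IsLeftDescent u i
    · have hsi := cs.simple_mem_closure_simple_image_of_isLeftDescent hu hui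
      have hvi : cs.IsLeftDescent v i := not_not.mp (not_and.mp hup hsi)
      simpa using simple_mul_bruhatLE_of_isLeftDescent hvi <|
        hvmax _ (mul_mem hsi hu) (simple_mul_bruhatLE_simple_mul_of_isLeftDescent hw huw hui)
    · exact hvmax u hu (bruhatLE_simple_mul_of_isLeftDescent hw huw hui)

variable (cs) in
theorem exists_isGreatestBruhatBelow (J : Set B) (w : W) :
    ∃ v, cs.IsGreatestBruhatBelow (Subgroup.closure (cs.simple '' J)) w v := by
  generalize hn : ℓ w = n
  induction n using Nat.strong_induction_on generalizing w with
  | _ n ih =>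
  rcases eq_or_ne w 1 with rfl | hw
  · refine ⟨1, one_mem _, .refl, fun u _ hu ↦ ?_⟩
    have := length_le_of_bruhatLE hu
    rw [length_one, Nat.le_zero, length_eq_zero_iff] at this
    rw [this]
    exact .refl
  · obtain ⟨i, hi⟩ := cs.exists_leftDescent_of_ne_one hw
    obtain ⟨v, hv⟩ := ih _ (hn ▸ hi) (s i * w) rfl
    exact exists_isGreatestBruhatBelow_of_isLeftDescent hi hv

end Parabolic

end Bruhat

end CoxeterSystem

theorem mem_altW {B : Type*} {i j b : B} {n : ℕ} (h : b ∈ altW i j n) : b = i ∨ b = j := by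
  induction n generalizing i j with
  | zero => simp [altW] at h
  | succ n ih =>
    rcases List.mem_cons.mp h with rfl | h
    · exact .inl rfl
    · exact (ih h).symm

/-- if `w` is full with respect to `J ⊆ S`, then there is a `v` in the
standard parabolic subgroup `⟨J⟩`, full with respect to `J`, with `v ≤ w`. -/
theorem stmt8 {B : Type*} {W : Type*} [Group W] {M : CoxeterMatrix B}
    (cs : CoxeterSystem M W) (J : Set B) (w : W) (hw : IsFullWrt cs J w) :
    ∃ v ∈ (Subgroup.closure (cs.simple '' J) : Subgroup W),
      IsFullWrt cs J v ∧ bruhatLE cs v w := by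
  obtain ⟨v, hvJ, hvw, hvmax⟩ := cs.exists_isGreatestBruhatBelow J w
  refine ⟨v, hvJ, fun i hi j hj hij ↦ ?_, hvw⟩
  obtain ⟨hM, hle⟩ := hw i hi j hj hij
  refine ⟨hM, hvmax _ (cs.wordProd_mem_closure_simple_image fun b hb ↦ ?_) hle⟩
  rcases mem_altW hb with rfl | rfl
  exacts [hi, hj]
end

section
/- Let φ be a special matching of a dihedral Coxeter group ⟨x, y⟩ with φ(e) one of the generators, and for j ≤ m_{xy} let Y_j = yxyx··· (j letters, starting with y). Then φ fails to be x-regular on the left if and only if there exists j ≤ m_{xy} − 3 with φ(Y_j) = Y_{j+1} and φ(xY_j) ≠ xY_{j+1} (in which case necessarily φ(xY_j) = Y_{j+2}). -/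
open CoxeterSystem Polynomial

/-!
In the dihedral group every element of length `k` is one of the alternating words
`X_k = x y x ⋯`, `Y_k = y x y ⋯`, and `k ≤ m`. These are distinct for `0 < k < m`, because
`X_k = (s_x s_y)^k Y_k` and `s_x s_y` has order `m`; so `ℓ X_k = ℓ Y_k = k`, `u ⋖ v` iff
`ℓ v = ℓ u + 1`, and `φ` is an involution moving each element one level up or down.
Level `0` is `{e}` and each level `0 < k < m` has two elements, so `φ` has exactly one edge
between consecutive levels. Left multiplication by `x` swaps `Y_j` and `X_{j+1}`. Once
`φ(x Y_j) = x Y_{j+1}` holds whenever `φ(Y_j) = Y_{j+1}` and `j ≤ m - 3`, an induction down the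
levels excludes edges `X_k — Y_{k+1}` below the top, and then `φ` commutes with left
multiplication by `x` level by level.
-/

namespace CoxeterSystem

variable {B W : Type*} [Group W] {M : CoxeterMatrix B} (cs : CoxeterSystem M W)

local prefix:100 "s" => cs.simple
local prefix:100 "π" => cs.wordProd
local prefix:100 "ℓ" => cs.length

theorem altW_eq_reverse_alternatingWord (i j : B) (n : ℕ) :
    altW i j n = (alternatingWord j i n).reverse := by
  induction n generalizing i j with
  | zero => rfl
  | succ n ih => rw [alternatingWord_succ, List.concat_eq_append, List.reverse_append, ← ih]; rfl

@[simp]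
theorem length_altW (i j : B) (n : ℕ) : (altW i j n).length = n := by
  simp [altW_eq_reverse_alternatingWord]

theorem wordProd_altW_succ (i j : B) (k : ℕ) : π altW i j (k + 1) = s i * π altW j i k :=
  cs.wordProd_cons i _

theorem wordProd_altW_add_two (i j : B) (k : ℕ) :
    π altW i j (k + 2) = s i * s j * π altW i j k := by
  rw [wordProd_altW_succ, wordProd_altW_succ, mul_assoc]

theorem wordProd_altW_eq_pow_mul (i j : B) (k : ℕ) :
    π altW i j k = (s i * s j) ^ k * π altW j i k := by
  induction k generalizing i j with
  | zero => simp [altW]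
  | succ k ih =>
    rw [wordProd_altW_succ, ih j i, ← mul_assoc, ← mul_pow_mul, wordProd_altW_succ, pow_succ]
    simp only [mul_assoc, simple_mul_simple_cancel_left]

theorem wordProd_altW_braid (i j : B) : π altW i j (M i j) = π altW j i (M i j) := by
  have h := cs.wordProd_braidWord_eq i j
  rw [braidWord, braidWord, M.symmetric j i] at h
  simp [altW_eq_reverse_alternatingWord, wordProd_reverse, h]

theorem length_wordProd_altW_le (i j : B) (k : ℕ) : ℓ (π altW i j k) ≤ k :=
  (cs.length_wordProd_le _).trans_eq (length_altW i j k)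

theorem length_wordProd_altW_lt (i j : B) {n : ℕ} (hM : M i j ≠ 0) (hn : M i j < n) :
    ℓ (π altW i j n) < n := by
  refine (cs.length_wordProd_altW_le i j n).lt_of_ne fun h => ?_
  apply cs.not_isReduced_alternatingWord j i (M.symmetric j i ▸ hM) (M.symmetric j i ▸ hn)
  rw [← isReduced_reverse_iff, ← altW_eq_reverse_alternatingWord, IsReduced, h, length_altW]

theorem isReflection_wordProd_altW_odd (i j : B) (k : ℕ) :
    cs.IsReflection (π altW i j (2 * k + 1)) := by
  rw [altW_eq_reverse_alternatingWord, wordProd_reverse]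
  apply IsReflection.isReflection_inv
  rw [← cs.getElem_leftInvSeq_alternatingWord i j (k + 1) k (by omega)]
  exact cs.isReflection_of_mem_leftInvSeq _ (List.getElem_mem _)

variable {x y : B}

theorem orderOf_simple_mul_simple (hxy : x ≠ y) (hall : ∀ b : B, b = x ∨ b = y) :
    orderOf (s x * s y) = M x y := by
  classical
  let f : B → DihedralGroup (M x y) := fun b => if b = x then .sr 0 else .sr 1
  have hf : M.IsLiftable f := by
    intro i j
    rcases hall i with hi | hi <;> rcases hall j with hj | hj <;>
      simp [hi, hj, f, hxy.symm, DihedralGroup.sr_mul_sr, DihedralGroup.r_pow, M.symmetric y x]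
  have hψ : cs.lift ⟨f, hf⟩ (s x * s y) = .r 1 := by
    simp [f, hxy.symm, DihedralGroup.sr_mul_sr]
  apply Nat.dvd_antisymm (orderOf_dvd_of_pow_eq_one (cs.simple_mul_simple_pow x y))
  have h := orderOf_map_dvd (cs.lift ⟨f, hf⟩) (s x * s y)
  rwa [hψ, DihedralGroup.orderOf_r_one] at h

theorem simple_mul_simple_pow_ne_one (hxy : x ≠ y) (hall : ∀ b : B, b = x ∨ b = y)
    {n : ℕ} (hn : 0 < n) (h : M x y = 0 ∨ n < M x y) : (s x * s y) ^ n ≠ 1 := by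
  intro h1
  have hdvd := orderOf_dvd_of_pow_eq_one h1
  rw [cs.orderOf_simple_mul_simple hxy hall] at hdvd
  rcases h with h | h
  · rw [h, zero_dvd_iff] at hdvd
    omega
  · exact absurd (Nat.le_of_dvd hn hdvd) (by omega)

theorem wordProd_altW_ne (hxy : x ≠ y) (hall : ∀ b : B, b = x ∨ b = y)
    {k : ℕ} (hk : 0 < k) (h : M x y = 0 ∨ k < M x y) : π altW x y k ≠ π altW y x k := by
  rw [wordProd_altW_eq_pow_mul]
  exact fun he => cs.simple_mul_simple_pow_ne_one hxy hall hk h (mul_eq_right.mp he)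

theorem eq_wordProd_altW_of_simple_mul {i j : B} {w : W} {n : ℕ} (hw : ℓ w = n + 1)
    (h : s i * w = π altW i j n ∨ s i * w = π altW j i n) : w = π altW i j (n + 1) := by
  have hw' : w = s i * (s i * w) := (cs.simple_mul_simple_cancel_left i).symm
  rcases n with _ | n
  · rw [hw']; rcases h with h | h <;> rw [h] <;> rfl
  rcases h with h | h
  · rw [hw', h, wordProd_altW_succ, simple_mul_simple_cancel_left] at hw
    have := cs.length_wordProd_altW_le j i n
    omega
  · rw [hw', h, ← wordProd_altW_succ]

theorem eq_wordProd_altW_of_length (hall : ∀ b : B, b = x ∨ b = y) {w : W} {n : ℕ}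
    (hn : ℓ w = n) : w = π altW x y n ∨ w = π altW y x n := by
  induction n generalizing w with
  | zero => exact .inl (cs.length_eq_zero_iff.mp hn)
  | succ n ih =>
    obtain ⟨i, hi⟩ := cs.exists_leftDescent_of_ne_one (w := w) fun h => by simp [h] at hn
    have hi' : ℓ (s i * w) = n := by
      have := cs.length_simple_mul w i
      rw [IsLeftDescent] at hi
      omega
    rcases hall i with rfl | rfl
    · exact .inl (cs.eq_wordProd_altW_of_simple_mul hn (ih hi'))
    · exact .inr (cs.eq_wordProd_altW_of_simple_mul hn (ih hi').symm)

theorem eq_wordProd_altW_length (hall : ∀ b : B, b = x ∨ b = y) (w : W) :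
    w = π altW x y (ℓ w) ∨ w = π altW y x (ℓ w) :=
  cs.eq_wordProd_altW_of_length hall rfl

theorem length_le_M (hall : ∀ b : B, b = x ∨ b = y) (w : W) :
    M x y = 0 ∨ ℓ w ≤ M x y := by
  refine or_iff_not_imp_left.mpr fun hM => not_lt.mp fun hlt => ?_
  rcases cs.eq_wordProd_altW_length hall w with h | h
  · have := cs.length_wordProd_altW_lt x y hM hlt
    rw [← h] at this
    omega
  · have := cs.length_wordProd_altW_lt y x (M.symmetric x y ▸ hM) (M.symmetric x y ▸ hlt)
    rw [← h] at this
    omega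

theorem length_wordProd_altW (hxy : x ≠ y) (hall : ∀ b : B, b = x ∨ b = y)
    {k : ℕ} (hk : M x y = 0 ∨ k ≤ M x y) : ℓ (π altW x y k) = k := by
  induction k generalizing x y with
  | zero => simp [altW]
  | succ k ih =>
    have hY : ℓ (π altW y x k) = k :=
      ih hxy.symm (fun b => (hall b).symm) (by rw [M.symmetric]; omega)
    rw [wordProd_altW_succ]
    rcases cs.length_simple_mul (π altW y x k) x with h | h
    · omega
    exfalso
    obtain ⟨j, rfl⟩ : ∃ j, k = j + 1 := ⟨k - 1, by omega⟩
    rw [← wordProd_altW_succ] at h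
    rcases cs.eq_wordProd_altW_of_length hall (w := π altW x y (j + 2)) (n := j)
        (by rw [hY] at h; exact Nat.succ.inj h) with h | h <;>
      rw [wordProd_altW_add_two] at h
    · exact cs.simple_mul_simple_pow_ne_one hxy hall (n := 1) one_pos (by omega)
        (by simpa using h)
    · rw [wordProd_altW_eq_pow_mul, ← mul_assoc, ← pow_succ', mul_eq_right] at h
      exact cs.simple_mul_simple_pow_ne_one hxy hall (n := j + 1) (by omega) (by omega) h

theorem length_wordProd_altW' (hxy : x ≠ y) (hall : ∀ b : B, b = x ∨ b = y)
    {k : ℕ} (hk : M x y = 0 ∨ k ≤ M x y) : ℓ (π altW y x k) = k :=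
  cs.length_wordProd_altW hxy.symm (fun b => (hall b).symm) (M.symmetric x y ▸ hk)

theorem isReflection_of_odd_length (hall : ∀ b : B, b = x ∨ b = y) {w : W}
    (hw : Odd (ℓ w)) : cs.IsReflection w := by
  obtain ⟨k, hk⟩ := hw
  rcases cs.eq_wordProd_altW_length hall w with h | h <;> rw [h, hk] <;>
    exact cs.isReflection_wordProd_altW_odd _ _ k

theorem bruhatLE_of_length_eq_add_one (hall : ∀ b : B, b = x ∨ b = y) {u v : W}
    (h : ℓ v = ℓ u + 1) : bruhatLE cs u v := by
  refine .single ⟨u⁻¹ * v, cs.isReflection_of_odd_length hall ?_, by group, by omega⟩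
  have := cs.length_mul_mod_two u⁻¹ v
  rw [cs.length_inv] at this
  rw [Nat.odd_iff]
  omega

theorem bruhatLE_of_length_lt (hxy : x ≠ y) (hall : ∀ b : B, b = x ∨ b = y)
    {u v : W} (h : ℓ u < ℓ v) : bruhatLE cs u v := by
  obtain ⟨d, hd⟩ : ∃ d, ℓ v = ℓ u + d + 1 := ⟨ℓ v - ℓ u - 1, by omega⟩
  induction d generalizing v with
  | zero => exact cs.bruhatLE_of_length_eq_add_one hall hd
  | succ d ih =>
    have hz : ℓ (π altW x y (ℓ u + d + 1)) = ℓ u + d + 1 :=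
      cs.length_wordProd_altW hxy hall (by have := cs.length_le_M hall v; omega)
    exact (ih (by omega) hz).trans (cs.bruhatLE_of_length_eq_add_one hall (by omega))

theorem length_lt_of_bruhatLE {u v : W} (h : bruhatLE cs u v) (hne : u ≠ v) : ℓ u < ℓ v := by
  induction h with
  | refl => exact absurd rfl hne
  | @tail z v _ hzv ih =>
    obtain ⟨t, -, -, hlt⟩ := hzv
    by_cases huz : u = z
    · exact huz ▸ hlt
    · exact (ih huz).trans hlt

theorem length_eq_add_one_of_bCov (hxy : x ≠ y) (hall : ∀ b : B, b = x ∨ b = y)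
    {u v : W} (h : bCov cs u v) : ℓ v = ℓ u + 1 := by
  obtain ⟨hle, hne, hmid⟩ := h
  have hlt := cs.length_lt_of_bruhatLE hle hne
  by_contra hne'
  have hz : ℓ (π altW x y (ℓ u + 1)) = ℓ u + 1 :=
    cs.length_wordProd_altW hxy hall (by have := cs.length_le_M hall v; omega)
  rcases hmid (π altW x y (ℓ u + 1)) (cs.bruhatLE_of_length_lt hxy hall (by omega))
    (cs.bruhatLE_of_length_lt hxy hall (by omega)) with h | h <;> rw [h] at hz <;> omega

structure IsLengthMatching (f : W → W) : Prop where
  involutive : Function.Involutive f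
  length_apply (w : W) : ℓ (f w) = ℓ w + 1 ∨ ℓ w = ℓ (f w) + 1

def LeftRegOnAltW (f : W → W) (x y : B) : Prop :=
  ∀ j, (M x y = 0 ∨ j + 3 ≤ M x y) → f (π altW y x j) = π altW y x (j + 1) →
    f (s x * π altW y x j) = s x * π altW y x (j + 1)

variable {cs} in
theorem _root_.BSM.isLengthMatching (hxy : x ≠ y) (hall : ∀ b : B, b = x ∨ b = y)
    (φ : BSM cs) (hdom : φ.dom = Set.univ) : IsLengthMatching cs φ.toFun where
  involutive w := φ.invol w (hdom ▸ Set.mem_univ w)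
  length_apply w := (φ.cov w (hdom ▸ Set.mem_univ w)).symm.imp
    (cs.length_eq_add_one_of_bCov hxy hall) (cs.length_eq_add_one_of_bCov hxy hall)

namespace IsLengthMatching

variable {cs} {f : W → W}

theorem length_apply_of_up_up (hf : IsLengthMatching cs f) (hall : ∀ b : B, b = x ∨ b = y)
    {k : ℕ} (hX : ℓ (f (π altW x y (k + 1))) = k + 2)
    (hY : ℓ (f (π altW y x (k + 1))) = k + 2) {u : W} (hu : ℓ u = k) : ℓ (f u) + 1 = k := by
  refine hu ▸ ((hf.length_apply u).resolve_left fun hup => ?_).symm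
  have hfu := hf.involutive u
  rcases cs.eq_wordProd_altW_of_length hall (w := f u) (n := k + 1) (by omega) with h | h <;>
    rw [h] at hfu
  · rw [hfu] at hX; omega
  · rw [hfu] at hY; omega

theorem up_up_of_down_down (hf : IsLengthMatching cs f) (hxy : x ≠ y)
    (hall : ∀ b : B, b = x ∨ b = y) {k : ℕ} (hk : M x y = 0 ∨ k + 1 < M x y)
    (hX : ℓ (f (π altW x y (k + 1))) = k) (hY : ℓ (f (π altW y x (k + 1))) = k) :
    ℓ (f (π altW x y k)) = k + 1 ∧ ℓ (f (π altW y x k)) = k + 1 := by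
  have hne : f (π altW x y (k + 1)) ≠ f (π altW y x (k + 1)) :=
    hf.involutive.injective.ne (cs.wordProd_altW_ne hxy hall (by omega) hk)
  have hX1 := cs.length_wordProd_altW hxy hall (k := k + 1) (by omega)
  have hY1 := cs.length_wordProd_altW' hxy hall (k := k + 1) (by omega)
  rcases cs.eq_wordProd_altW_of_length hall hX with hX' | hX' <;>
    rcases cs.eq_wordProd_altW_of_length hall hY with hY' | hY'
  · exact absurd (hX'.trans hY'.symm) hne
  · rw [← hX', ← hY', hf.involutive, hf.involutive]
    exact ⟨hX1, hY1⟩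
  · rw [← hX', ← hY', hf.involutive, hf.involutive]
    exact ⟨hY1, hX1⟩
  · exact absurd (hX'.trans hY'.symm) hne

theorem up_iff_down (hf : IsLengthMatching cs f) (hxy : x ≠ y) (hall : ∀ b : B, b = x ∨ b = y)
    {k : ℕ} (hk1 : 1 ≤ k) (hk : M x y = 0 ∨ k < M x y) :
    ℓ (f (π altW x y k)) = k + 1 ↔ ℓ (f (π altW y x k)) + 1 = k := by
  suffices h : ¬(ℓ (f (π altW x y k)) = k + 1 ∧ ℓ (f (π altW y x k)) = k + 1) ∧
      ¬(ℓ (f (π altW x y k)) + 1 = k ∧ ℓ (f (π altW y x k)) + 1 = k) by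
    have hX := hf.length_apply (π altW x y k)
    have hY := hf.length_apply (π altW y x k)
    rw [cs.length_wordProd_altW hxy hall (by omega)] at hX
    rw [cs.length_wordProd_altW' hxy hall (by omega)] at hY
    omega
  induction k, hk1 using Nat.le_induction with
  | base =>
    refine ⟨fun ⟨hX, hY⟩ => ?_, fun ⟨hX, hY⟩ => ?_⟩
    · have := hf.length_apply_of_up_up hall (k := 0) hX hY cs.length_one
      omega
    · refine cs.wordProd_altW_ne hxy hall one_pos hk (hf.involutive.injective ?_)
      rw [cs.length_eq_zero_iff.mp (by omega : ℓ (f (π altW x y 1)) = 0),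
        cs.length_eq_zero_iff.mp (by omega : ℓ (f (π altW y x 1)) = 0)]
  | succ k hk1 ih =>
    have ih := ih (by omega)
    refine ⟨fun ⟨hX, hY⟩ => ih.2 ⟨?_, ?_⟩, fun ⟨hX, hY⟩ => ih.1 ?_⟩
    · exact hf.length_apply_of_up_up hall hX hY (cs.length_wordProd_altW hxy hall (by omega))
    · exact hf.length_apply_of_up_up hall hX hY (cs.length_wordProd_altW' hxy hall (by omega))
    · exact hf.up_up_of_down_down hxy hall (by omega) (by omega) (by omega)

theorem apply_wordProd_altW_succ_of_apply (hf : IsLengthMatching cs f) (hxy : x ≠ y)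
    (hall : ∀ b : B, b = x ∨ b = y) {j : ℕ} (hj : M x y = 0 ∨ j + 2 ≤ M x y)
    (h : f (π altW y x j) = π altW y x (j + 1)) :
    f (π altW x y (j + 1)) = π altW x y (j + 2) ∨
      f (π altW x y (j + 1)) = π altW y x (j + 2) := by
  have hdown : ℓ (f (π altW y x (j + 1))) + 1 = j + 1 := by
    rw [← h, hf.involutive, cs.length_wordProd_altW' hxy hall (by omega)]
  exact cs.eq_wordProd_altW_of_length hall
    ((hf.up_iff_down hxy hall (k := j + 1) (by omega) (by omega)).mpr hdown)

theorem apply_wordProd_altW_succ_of_leftReg (hf : IsLengthMatching cs f) (hxy : x ≠ y)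
    (hall : ∀ b : B, b = x ∨ b = y) (hreg : LeftRegOnAltW cs f x y) {j : ℕ}
    (hj : M x y = 0 ∨ j + 1 ≤ M x y) (h : f (π altW y x j) = π altW y x (j + 1)) :
    f (π altW x y (j + 1)) = π altW x y (j + 2) := by
  by_cases hj3 : M x y = 0 ∨ j + 3 ≤ M x y
  · simpa only [← wordProd_altW_succ] using hreg j hj3 h
  have htop := cs.wordProd_altW_braid x y
  obtain hm | hm : M x y = j + 2 ∨ M x y = j + 1 := by omega
  · rw [hm] at htop
    rcases hf.apply_wordProd_altW_succ_of_apply hxy hall (by omega) h with h' | h'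
    · exact h'
    · rw [h', htop]
  · rw [hm] at htop
    rw [htop, ← h, hf.involutive, cs.wordProd_altW_succ x y (j + 1), ← htop, wordProd_altW_succ,
      simple_mul_simple_cancel_left]

/- An edge `X_{j+1} — Y_{j+2}` sends `Y_{j+1}` down: to `Y_j`, which `hreg` forbids, or to `X_j`,
an edge of the same kind one level lower. -/
theorem apply_wordProd_altW_ne (hf : IsLengthMatching cs f) (hxy : x ≠ y)
    (hall : ∀ b : B, b = x ∨ b = y) (hreg : LeftRegOnAltW cs f x y) (j : ℕ)
    (hj : M x y = 0 ∨ j + 3 ≤ M x y) :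
    f (π altW x y (j + 1)) ≠ π altW y x (j + 2) := by
  induction j using Nat.strong_induction_on with
  | _ j ih =>
  intro hf'
  have hup : ℓ (f (π altW x y (j + 1))) = j + 1 + 1 := by
    rw [hf', cs.length_wordProd_altW' hxy hall (by omega)]
  have hdown := (hf.up_iff_down hxy hall (k := j + 1) (by omega) (by omega)).mp hup
  have key : f (π altW y x (j + 1)) ≠ π altW y x j := fun hY => by
    have hX := hf.apply_wordProd_altW_succ_of_leftReg hxy hall hreg (j := j) (by omega)
      (by rw [← hY, hf.involutive])
    exact cs.wordProd_altW_ne hxy hall (k := j + 2) (by omega) (by omega) (hX.symm.trans hf')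
  rcases cs.eq_wordProd_altW_of_length hall (w := f (π altW y x (j + 1))) (n := j) (by omega)
    with h | h
  · rcases j with _ | i
    · exact key h
    · exact ih i (by omega) (by omega) (by rw [← h, hf.involutive])
  · exact key h

theorem apply_wordProd_altW_of_up (hf : IsLengthMatching cs f) (hxy : x ≠ y)
    (hall : ∀ b : B, b = x ∨ b = y) (hreg : LeftRegOnAltW cs f x y) {k : ℕ} (hk : 1 ≤ k)
    (hup : ℓ (f (π altW x y k)) = k + 1) : f (π altW x y k) = π altW x y (k + 1) := by
  obtain ⟨j, rfl⟩ : ∃ j, k = j + 1 := ⟨k - 1, by omega⟩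
  rcases cs.eq_wordProd_altW_of_length hall hup with h | h
  · exact h
  by_cases hj : M x y = 0 ∨ j + 3 ≤ M x y
  · exact absurd h (hf.apply_wordProd_altW_ne hxy hall hreg j hj)
  · have hb := cs.length_le_M hall (f (π altW x y (j + 1)))
    have htop := cs.wordProd_altW_braid x y
    rw [show M x y = j + 2 by omega] at htop
    rw [h, htop]

theorem apply_simple_mul_wordProd_altW_of_up (hf : IsLengthMatching cs f) (hxy : x ≠ y)
    (hall : ∀ b : B, b = x ∨ b = y) (hreg : LeftRegOnAltW cs f x y) {n : ℕ}
    (hup : ℓ (f (π altW y x n)) = n + 1) :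
    f (s x * π altW y x n) = s x * f (π altW y x n) := by
  rw [← wordProd_altW_succ]
  rcases cs.eq_wordProd_altW_of_length hall hup with h | h
  · have hX : f (π altW x y (n + 1)) = π altW y x n := by rw [← h, hf.involutive]
    rw [hX, h, wordProd_altW_succ, simple_mul_simple_cancel_left]
  · have hb := cs.length_le_M hall (f (π altW y x n))
    rw [h, hf.apply_wordProd_altW_succ_of_leftReg hxy hall hreg (by omega) h, wordProd_altW_succ]

theorem apply_simple_mul_wordProd_altW_succ_of_up (hf : IsLengthMatching cs f) (hxy : x ≠ y)
    (hall : ∀ b : B, b = x ∨ b = y) (hreg : LeftRegOnAltW cs f x y) {j : ℕ}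
    (hup : ℓ (f (π altW x y (j + 1))) = j + 1 + 1) :
    f (s x * π altW x y (j + 1)) = s x * f (π altW x y (j + 1)) := by
  have hb := cs.length_le_M hall (f (π altW x y (j + 1)))
  have hdown := (hf.up_iff_down hxy hall (k := j + 1) (by omega) (by omega)).mp hup
  have hY : f (π altW y x (j + 1)) = π altW y x j := by
    rcases cs.eq_wordProd_altW_of_length hall (w := f (π altW y x (j + 1))) (n := j) (by omega)
      with h | h
    · rcases j with _ | i
      · exact h
      · exact absurd (by rw [← h, hf.involutive])
          (hf.apply_wordProd_altW_ne hxy hall hreg i (by omega))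
    · exact h
  rw [hf.apply_wordProd_altW_of_up hxy hall hreg (by omega) hup, cs.wordProd_altW_succ x y j,
    cs.wordProd_altW_succ x y (j + 1)]
  simp only [simple_mul_simple_cancel_left]
  rw [← hY, hf.involutive]

theorem apply_simple_mul_of_up (hf : IsLengthMatching cs f) (hxy : x ≠ y)
    (hall : ∀ b : B, b = x ∨ b = y) (hreg : LeftRegOnAltW cs f x y) {w : W}
    (hup : ℓ (f w) = ℓ w + 1) : f (s x * w) = s x * f w := by
  obtain ⟨n, hn⟩ : ∃ n, ℓ w = n := ⟨_, rfl⟩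
  rw [hn] at hup
  rcases cs.eq_wordProd_altW_of_length hall hn with rfl | rfl
  · rcases n with _ | j
    · exact hf.apply_simple_mul_wordProd_altW_of_up hxy hall hreg (n := 0) hup
    · exact hf.apply_simple_mul_wordProd_altW_succ_of_up hxy hall hreg hup
  · exact hf.apply_simple_mul_wordProd_altW_of_up hxy hall hreg hup

theorem apply_simple_mul (hf : IsLengthMatching cs f) (hxy : x ≠ y)
    (hall : ∀ b : B, b = x ∨ b = y) (hreg : LeftRegOnAltW cs f x y) (w : W) :
    f (s x * w) = s x * f w := by
  rcases hf.length_apply w with h | h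
  · exact hf.apply_simple_mul_of_up hxy hall hreg h
  · have h' := hf.apply_simple_mul_of_up hxy hall hreg (w := f w) (by rw [hf.involutive]; omega)
    rw [hf.involutive] at h'
    rw [← h', hf.involutive]

end IsLengthMatching

end CoxeterSystem

theorem stmt13_general {B : Type*} {W : Type*} [Group W] {M : CoxeterMatrix B}
    (cs : CoxeterSystem M W) (x y : B) (hxy : x ≠ y)
    (hall : ∀ b : B, b = x ∨ b = y)
    (φ : BSM cs) (hdom : φ.dom = Set.univ) :
    (¬ ∀ z : W, φ.toFun (cs.simple x * z) = cs.simple x * φ.toFun z) ↔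
      ∃ j : ℕ, (M x y = 0 ∨ j + 3 ≤ M x y) ∧
        φ.toFun (cs.wordProd (altW y x j)) = cs.wordProd (altW y x (j + 1)) ∧
        φ.toFun (cs.simple x * cs.wordProd (altW y x j)) ≠
          cs.simple x * cs.wordProd (altW y x (j + 1)) ∧
        φ.toFun (cs.simple x * cs.wordProd (altW y x j)) =
          cs.wordProd (altW y x (j + 2)) := by
  have hf := φ.isLengthMatching hxy hall hdom
  constructor
  · intro hnot
    by_contra hno
    refine hnot (hf.apply_simple_mul hxy hall fun j hj h => ?_)
    by_contra hne
    refine hno ⟨j, hj, h, hne, ?_⟩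
    simp only [← wordProd_altW_succ] at hne ⊢
    exact (hf.apply_wordProd_altW_succ_of_apply hxy hall (by omega) h).resolve_left hne
  · rintro ⟨j, -, h, hne, -⟩ hreg
    exact hne (by rw [hreg, h])

/-- for a special matching `φ` of a dihedral Coxeter group `⟨x,y⟩` with
`φ(e)` a generator, `φ` fails to be left `x`-regular iff there is `j ≤ m_{xy} - 3` with
`φ(Y_j) = Y_{j+1}` and `φ(x Y_j) ≠ x Y_{j+1}`, in which case `φ(x Y_j) = Y_{j+2}`
(where `Y_j` is the alternating word of length `j` starting with `y`). -/
theorem stmt13 {B : Type*} {W : Type*} [Group W] {M : CoxeterMatrix B}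
    (cs : CoxeterSystem M W) (x y : B) (hxy : x ≠ y)
    (hall : ∀ b : B, b = x ∨ b = y)
    (φ : BSM cs) (hdom : φ.dom = Set.univ)
    (hgen : ∃ i : B, φ.toFun 1 = cs.simple i) :
    (¬ ∀ z : W, φ.toFun (cs.simple x * z) = cs.simple x * φ.toFun z) ↔
      ∃ j : ℕ, (M x y = 0 ∨ j + 3 ≤ M x y) ∧
        φ.toFun (cs.wordProd (altW y x j)) = cs.wordProd (altW y x (j + 1)) ∧
        φ.toFun (cs.simple x * cs.wordProd (altW y x j)) ≠
          cs.simple x * cs.wordProd (altW y x (j + 1)) ∧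
        φ.toFun (cs.simple x * cs.wordProd (altW y x j)) =
          cs.wordProd (altW y x (j + 2)) :=
  stmt13_general cs x y hxy hall φ hdom
end
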